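/- arXiv:2107.03972 — 4 statements merged into one kernel-verified Lean document; each statement's English description precedes it below -/
import Mathlib

section
/- Fix a set 𝒞 of propositional connectives. Then FOCDS(𝒞) = FOCLS(𝒞) (i.e., a sequent of first-order formulas over 𝒞 is valid in all constant-domain Kripke models if and only if it is valid in all classical models) if and only if every connective in 𝒞 is monotonic. -/
open Classical


/-- First-order formulas over a set `C` of propositional connectives
(each `c : C` has arity `ar c`).  Individual variables and, for each arity `n`,
the `n`-ary predicate symbols are indexed by `ℕ`. -/
inductive Formula (C : Type) (ar : C → ℕ) : Type
  | atom (n : ℕ) (p : ℕ) (v : Fin n → ℕ)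
  | conn (c : C) (args : Fin (ar c) → Formula C ar)
  | all (x : ℕ) (φ : Formula C ar)
  | ex  (x : ℕ) (φ : Formula C ar)

/-- A classical first-order model: a nonempty domain `D` (a set in an ambient
type `U`) together with an interpretation of every `n`-ary predicate symbol. -/
structure CModel where
  U : Type
  D : Set U
  D_ne : D.Nonempty
  I : (n : ℕ) → ℕ → (Fin n → U) → Bool

/-- Classical interpretation of a formula (value in `{0,1}`, coded by `Bool`),
where `tf c` is the truth function of the connective `c`. -/
noncomputable def cVal {C : Type} {ar : C → ℕ}
    (tf : (c : C) → (Fin (ar c) → Bool) → Bool) (M : CModel) :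
    Formula C ar → (ℕ → M.U) → Bool
  | .atom n p v, ρ => M.I n p (fun i => ρ (v i))
  | .conn c args, ρ => tf c (fun i => cVal tf M (args i) ρ)
  | .all x φ, ρ => decide (∀ a ∈ M.D, cVal tf M φ (Function.update ρ x a) = true)
  | .ex x φ, ρ => decide (∃ a ∈ M.D, cVal tf M φ (Function.update ρ x a) = true)

/-- A first-order Kripke model: a nonempty preordered set of worlds `W`,
monotone nonempty domains `D w` (sets in an ambient type `U`), and hereditary
interpretations of the predicate symbols. -/
structure KModel where
  W : Type
  W_ne : Nonempty W
  R : W → W → Prop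
  refl : ∀ w, R w w
  trans : ∀ {w v u}, R w v → R v u → R w u
  U : Type
  D : W → Set U
  D_ne : ∀ w, (D w).Nonempty
  D_mono : ∀ {w v}, R w v → D w ⊆ D v
  I : W → (n : ℕ) → ℕ → (Fin n → U) → Bool
  hered : ∀ {w v}, R w v → ∀ n p (a : Fin n → U),
      (∀ i, a i ∈ D w) → I w n p a = true → I v n p a = true

/-- Kripke interpretation of a formula at a world (value in `{0,1}`). -/
noncomputable def kVal {C : Type} {ar : C → ℕ}
    (tf : (c : C) → (Fin (ar c) → Bool) → Bool) (K : KModel) :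
    Formula C ar → K.W → (ℕ → K.U) → Bool
  | .atom n p v, w, ρ => K.I w n p (fun i => ρ (v i))
  | .conn c args, w, ρ =>
      decide (∀ u, K.R w u → tf c (fun i => kVal tf K (args i) u ρ) = true)
  | .all x φ, w, ρ =>
      decide (∀ u, K.R w u → ∀ a ∈ K.D u,
        kVal tf K φ u (Function.update ρ x a) = true)
  | .ex x φ, w, ρ =>
      decide (∃ a ∈ K.D w, kVal tf K φ w (Function.update ρ x a) = true)

/-- A Kripke model has constant domains. -/
def ConstDom (K : KModel) : Prop := ∀ w v : K.W, K.D w = K.D v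

/-- The sequent `Γ ⟹ Δ` is valid in all classical models (`Γ ⟹ Δ ∈ FOCLS(𝒞)`):
at every classical model and assignment into the domain, its interpretation is 1,
i.e. it is never the case that everything in `Γ` gets 1 and everything in `Δ` gets 0. -/
def SeqCValid {C : Type} {ar : C → ℕ} (tf : (c : C) → (Fin (ar c) → Bool) → Bool)
    (Γ Δ : Set (Formula C ar)) : Prop :=
  ∀ M : CModel, ∀ ρ : ℕ → M.U, (∀ x, ρ x ∈ M.D) →
    ¬ ((∀ φ ∈ Γ, cVal tf M φ ρ = true) ∧ (∀ φ ∈ Δ, cVal tf M φ ρ = false))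

/-- The sequent `Γ ⟹ Δ` is valid in all constant-domain Kripke models
(`Γ ⟹ Δ ∈ FOCDS(𝒞)`). -/
def SeqCDValid {C : Type} {ar : C → ℕ} (tf : (c : C) → (Fin (ar c) → Bool) → Bool)
    (Γ Δ : Set (Formula C ar)) : Prop :=
  ∀ K : KModel, ConstDom K → ∀ w : K.W, ∀ ρ : ℕ → K.U, (∀ x, ρ x ∈ K.D w) →
    ¬ ((∀ φ ∈ Γ, kVal tf K φ w ρ = true) ∧ (∀ φ ∈ Δ, kVal tf K φ w ρ = false))

/-- A truth function is monotonic. -/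
def MonoTF {n : ℕ} (f : (Fin n → Bool) → Bool) : Prop :=
  ∀ a b : Fin n → Bool, (∀ i, a i ≤ b i) → f a ≤ f b

/-- Propositional formulas over `C`: built from propositional symbols
(indexed by `ℕ`) by the connectives in `C`. -/
inductive PFormula (C : Type) (ar : C → ℕ) : Type
  | atom (p : ℕ)
  | conn (c : C) (args : Fin (ar c) → PFormula C ar)

/-- Value of a propositional formula under a classical valuation `v`. -/
def pcVal {C : Type} {ar : C → ℕ} (tf : (c : C) → (Fin (ar c) → Bool) → Bool)
    (v : ℕ → Bool) : PFormula C ar → Bool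
  | .atom p => v p
  | .conn c args => tf c (fun i => pcVal tf v (args i))

/-- A propositional Kripke model. -/
structure PKModel where
  W : Type
  W_ne : Nonempty W
  R : W → W → Prop
  refl : ∀ w, R w w
  trans : ∀ {w v u}, R w v → R v u → R w u
  I : W → ℕ → Bool
  hered : ∀ {w v}, R w v → ∀ p, I w p = true → I v p = true

/-- Kripke interpretation of a propositional formula at a world. -/
noncomputable def pkVal {C : Type} {ar : C → ℕ}
    (tf : (c : C) → (Fin (ar c) → Bool) → Bool) (K : PKModel) :
    PFormula C ar → K.W → Bool
  | .atom p, w => K.I w p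
  | .conn c args, w =>
      decide (∀ u, K.R w u → tf c (fun i => pkVal tf K (args i) u) = true)

/-- The propositional sequent `Γ ⟹ Δ` is valid under all classical valuations
(`Γ ⟹ Δ ∈ CLS(𝒞)`). -/
def PSeqCValid {C : Type} {ar : C → ℕ} (tf : (c : C) → (Fin (ar c) → Bool) → Bool)
    (Γ Δ : Set (PFormula C ar)) : Prop :=
  ∀ v : ℕ → Bool,
    ¬ ((∀ φ ∈ Γ, pcVal tf v φ = true) ∧ (∀ φ ∈ Δ, pcVal tf v φ = false))

/-- The propositional sequent `Γ ⟹ Δ` is valid at all worlds of all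
propositional Kripke models (`Γ ⟹ Δ ∈ ILS(𝒞)`). -/
def PSeqKValid {C : Type} {ar : C → ℕ} (tf : (c : C) → (Fin (ar c) → Bool) → Bool)
    (Γ Δ : Set (PFormula C ar)) : Prop :=
  ∀ K : PKModel, ∀ w : K.W,
    ¬ ((∀ φ ∈ Γ, pkVal tf K φ w = true) ∧ (∀ φ ∈ Δ, pkVal tf K φ w = false))

/-- The formula `α` is classically valid (`α ∈ FOCL(𝒞)`). -/
def FmlCValid {C : Type} {ar : C → ℕ} (tf : (c : C) → (Fin (ar c) → Bool) → Bool)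
    (α : Formula C ar) : Prop :=
  ∀ M : CModel, ∀ ρ : ℕ → M.U, (∀ x, ρ x ∈ M.D) → cVal tf M α ρ = true

/-- The formula `α` is CD-valid (`α ∈ FOCD(𝒞)`): valid in all constant-domain
Kripke models. -/
def FmlCDValid {C : Type} {ar : C → ℕ} (tf : (c : C) → (Fin (ar c) → Bool) → Bool)
    (α : Formula C ar) : Prop :=
  ∀ K : KModel, ConstDom K → ∀ w : K.W, ∀ ρ : ℕ → K.U, (∀ x, ρ x ∈ K.D w) →
    kVal tf K α w ρ = true

/-- `α` is a propositional formula built only from propositional symbols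
(0-ary predicate symbols) and the connective `c`. -/
inductive IsPropC {C : Type} {ar : C → ℕ} (c : C) : Formula C ar → Prop
  | atom (p : ℕ) (v : Fin 0 → ℕ) : IsPropC c (.atom 0 p v)
  | conn (args : Fin (ar c) → Formula C ar) :
      (∀ i, IsPropC c (args i)) → IsPropC c (.conn c args)

/-- A propositional formula viewed as a first-order formula (propositional
symbols become 0-ary predicate symbols). -/
def PFormula.toFO {C : Type} {ar : C → ℕ} : PFormula C ar → Formula C ar
  | .atom p => .atom 0 p (fun i => i.elim0)
  | .conn c args => .conn c (fun i => (args i).toFO)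

/-!
With monotone connectives, a constant-domain Kripke model evaluates every formula at a world `w`
exactly as the classical model carried by `w`: a true formula `c(α⃗)` stays true at later worlds
because its arguments persist and `f_c` is monotone, and a true `∀x α` stays true because the
domain does not grow. A one-world Kripke model is a classical model, which gives the other
inclusion.

If instead `f_c a = 1` and `f_c b = 0` with `a ⊑ b`, the sequent
`{pᵢ | aᵢ = 1} ⟹ {c(p⃗)} ∪ {pᵢ | aᵢ = 0}` is classically valid, since it pins the atoms to `a`;
but it fails at the root of the two-world model whose atoms take the values `a` at the root and
`b` above it, where `c(p⃗)` is refuted by the upper world.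
-/

section

variable {C : Type} {ar : C → ℕ} (tf : (c : C) → (Fin (ar c) → Bool) → Bool)

lemma update_mem_of_forall_mem {α : Type} {S : Set α} {ρ : ℕ → α} (hρ : ∀ y, ρ y ∈ S)
    (x : ℕ) {a : α} (ha : a ∈ S) : ∀ y, Function.update ρ x a y ∈ S :=
  (Function.forall_update_iff ρ fun _ b => b ∈ S).2 ⟨ha, fun y _ => hρ y⟩

theorem kVal_le_of_R (K : KModel) (φ : Formula C ar) {w v : K.W} (hwv : K.R w v) :
    ∀ ρ : ℕ → K.U, (∀ x, ρ x ∈ K.D w) → kVal tf K φ w ρ ≤ kVal tf K φ v ρ := by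
  induction φ with
  | atom n p x =>
    intro ρ hρ
    exact Bool.le_iff_imp.2 (K.hered hwv n p _ fun i => hρ (x i))
  | conn c args ih =>
    intro ρ _
    simp only [kVal, Bool.le_iff_imp, decide_eq_true_eq]
    exact fun h u hvu => h u (K.trans hwv hvu)
  | all x φ ih =>
    intro ρ _
    simp only [kVal, Bool.le_iff_imp, decide_eq_true_eq]
    exact fun h u hvu => h u (K.trans hwv hvu)
  | ex x φ ih =>
    intro ρ hρ
    simp only [kVal, Bool.le_iff_imp, decide_eq_true_eq]
    rintro ⟨a, ha, h⟩
    exact ⟨a, K.D_mono hwv ha,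
      Bool.le_iff_imp.1 (ih _ (update_mem_of_forall_mem hρ x ha)) h⟩

def KModel.world (K : KModel) (w : K.W) : CModel := ⟨K.U, K.D w, K.D_ne w, K.I w⟩

theorem kVal_eq_cVal_world (hm : ∀ c, MonoTF (tf c)) (K : KModel) (hK : ConstDom K)
    (w : K.W) (φ : Formula C ar) :
    ∀ ρ : ℕ → K.U, (∀ x, ρ x ∈ K.D w) → kVal tf K φ w ρ = cVal tf (K.world w) φ ρ := by
  induction φ with
  | atom n p x => intro ρ _; rfl
  | conn c args ih =>
    intro ρ hρ
    have hw : (fun i => kVal tf K (args i) w ρ) = fun i => cVal tf (K.world w) (args i) ρ :=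
      funext fun i => ih i ρ hρ
    rw [Bool.eq_iff_iff]
    simp only [kVal, cVal, decide_eq_true_eq]
    refine ⟨fun h => hw ▸ h w (K.refl w), fun h u hwu => ?_⟩
    have hle := hm c _ _ fun i => kVal_le_of_R tf K (args i) hwu ρ hρ
    exact Bool.le_iff_imp.1 hle (hw ▸ h)
  | all x φ ih =>
    intro ρ hρ
    have ih' := fun a (ha : a ∈ K.D w) => ih _ (update_mem_of_forall_mem hρ x ha)
    rw [Bool.eq_iff_iff]
    simp only [kVal, cVal, decide_eq_true_eq]
    refine ⟨fun h a ha => ih' a ha ▸ h w (K.refl w) a ha, fun h u hwu a ha => ?_⟩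
    have haw : a ∈ K.D w := hK u w ▸ ha
    exact Bool.le_iff_imp.1 (kVal_le_of_R tf K φ hwu _ (update_mem_of_forall_mem hρ x haw))
      ((ih' a haw).trans (h a haw))
  | ex x φ ih =>
    intro ρ hρ
    rw [Bool.eq_iff_iff]
    simp only [kVal, cVal, decide_eq_true_eq]
    refine exists_congr fun a => and_congr_right fun ha => ?_
    rw [ih _ (update_mem_of_forall_mem hρ x ha)]
    rfl

abbrev CModel.toKModel (M : CModel) : KModel where
  W := Unit
  W_ne := ⟨()⟩
  R _ _ := True
  refl _ := trivial
  trans _ _ := trivial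
  U := M.U
  D _ := M.D
  D_ne _ := M.D_ne
  D_mono _ := subset_rfl
  I _ := M.I
  hered _ _ _ _ _ h := h

theorem kVal_toKModel (M : CModel) (φ : Formula C ar) (ρ : ℕ → M.U) :
    kVal tf M.toKModel φ () ρ = cVal tf M φ ρ := by
  induction φ generalizing ρ <;> simp [kVal, cVal, *]

theorem SeqCDValid.seqCValid {Γ Δ : Set (Formula C ar)} (h : SeqCDValid tf Γ Δ) :
    SeqCValid tf Γ Δ := by
  intro M ρ hρ
  simpa only [kVal_toKModel] using h M.toKModel (fun _ _ => rfl) () ρ hρ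

theorem SeqCValid.seqCDValid (hm : ∀ c, MonoTF (tf c)) {Γ Δ : Set (Formula C ar)}
    (h : SeqCValid tf Γ Δ) : SeqCDValid tf Γ Δ := by
  intro K hK w ρ hρ
  simpa only [kVal_eq_cVal_world tf hm K hK w _ ρ hρ] using h (K.world w) ρ hρ

def propVar (p : ℕ) : Formula C ar := .atom 0 p Fin.elim0

def connVars (c : C) : Formula C ar := .conn c fun i => propVar i

theorem seqCValid_connVars {c : C} {v : ℕ → Bool} (h : tf c (fun i => v i) = true) :
    SeqCValid tf (propVar '' {p | v p = true})
      (insert (connVars c) (propVar '' {p | v p = false})) := by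
  rintro M ρ - ⟨hΓ, hΔ⟩
  have hv : ∀ p, cVal tf M (propVar p) ρ = v p := fun p => by
    cases hp : v p
    · exact hΔ _ (Set.mem_insert_of_mem _ ⟨p, hp, rfl⟩)
    · exact hΓ _ ⟨p, hp, rfl⟩
  have hc := hΔ _ (Set.mem_insert _ _)
  simp [connVars, cVal, hv, h] at hc

def KModel.ofPropValuation (W : Type) [Preorder W] [Nonempty W] (V : W → ℕ → Bool)
    (hV : Monotone V) : KModel where
  W := W
  W_ne := ‹_›
  R := (· ≤ ·)
  refl := le_refl
  trans := le_trans
  U := Unit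
  D _ := Set.univ
  D_ne _ := Set.univ_nonempty
  D_mono _ := subset_rfl
  I w _ p _ := V w p
  hered h _ p _ _ := Bool.le_iff_imp.1 (hV h p)

theorem not_seqCDValid_connVars {c : C} {V : Bool → ℕ → Bool} (hV : Monotone V)
    (h : tf c (fun i => V true i) = false) :
    ¬ SeqCDValid tf (propVar '' {p | V false p = true})
      (insert (connVars c) (propVar '' {p | V false p = false})) := by
  intro hval
  refine hval (KModel.ofPropValuation Bool V hV) (fun _ _ => rfl) false (fun _ => ())
    (fun _ => trivial) ⟨?_, ?_⟩
  · rintro _ ⟨p, hp, rfl⟩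
    exact hp
  · rintro _ (rfl | ⟨p, hp, rfl⟩)
    · simp only [connVars, kVal, decide_eq_false_iff_not, not_forall]
      exact ⟨true, Bool.false_le true, by simpa [propVar, kVal, KModel.ofPropValuation] using h⟩
    · exact hp

theorem monoTF_of_seqCValid_imp_seqCDValid
    (h : ∀ Γ Δ : Set (Formula C ar), SeqCValid tf Γ Δ → SeqCDValid tf Γ Δ) (c : C) :
    MonoTF (tf c) := by
  intro a b hab
  by_contra hlt
  obtain ⟨hb, ha⟩ := Bool.lt_iff.1 (not_le.1 hlt)
  let V : Bool → ℕ → Bool := fun w p =>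
    if hp : p < ar c then cond w (b ⟨p, hp⟩) (a ⟨p, hp⟩) else false
  have hV : Monotone V := by
    intro w u hwu p
    dsimp only [V]
    split_ifs
    · revert hwu
      cases w <;> cases u <;> simp [hab _]
    · rfl
  have hVa : (fun i : Fin (ar c) => V false i) = a := funext fun i => dif_pos i.isLt
  have hVb : (fun i : Fin (ar c) => V true i) = b := funext fun i => dif_pos i.isLt
  exact not_seqCDValid_connVars tf hV (hVb ▸ hb)
    (h _ _ (seqCValid_connVars tf (hVa ▸ ha)))

end

/-- `FOCDS(𝒞) = FOCLS(𝒞)` iff every connective in `𝒞` is monotonic. -/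
theorem stmt_0 (C : Type) (ar : C → ℕ) (tf : (c : C) → (Fin (ar c) → Bool) → Bool) :
    (∀ Γ Δ : Set (Formula C ar), SeqCDValid tf Γ Δ ↔ SeqCValid tf Γ Δ) ↔
      ∀ c : C, MonoTF (tf c) :=
  ⟨fun h => monoTF_of_seqCValid_imp_seqCDValid tf fun Γ Δ => (h Γ Δ).2,
    fun hm _ _ => ⟨SeqCDValid.seqCValid tf, SeqCValid.seqCDValid tf hm⟩⟩
end

section
/- If every connective in 𝒞 is monotonic, then FOCDS(𝒞) = FOCLS(𝒞), i.e., a sequent of first-order formulas over 𝒞 is valid in all constant-domain Kripke models if and only if it is valid in all classical models. -/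
/-!
In a constant-domain Kripke model every formula is persistent along `⪯`: for `∃` this is
because the witness stays in the domain. Persistence of the arguments and monotonicity of
`f_c` make `f_c` at `w` a lower bound for its values at all later worlds, so the clause
"for all `v ⪰ w`" of a connective collapses to `v = w`; since the domain does not grow, the
same happens for `∀`. Hence every world of a constant-domain model evaluates each formula
exactly like the classical model it carries, and conversely every classical model is a
one-world constant-domain Kripke model.
-/

open Classical


lemma forall_update_mem {α β : Type*} [DecidableEq α] {S : Set β} {ρ : α → β}
    (hρ : ∀ x, ρ x ∈ S) (x : α) {a : β} (ha : a ∈ S) :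
    ∀ y, Function.update ρ x a y ∈ S :=
  (Function.forall_update_iff ρ fun _ b => b ∈ S).2 ⟨ha, fun y _ => hρ y⟩

def KModel.toC (K : KModel) (w : K.W) : CModel :=
  ⟨K.U, K.D w, K.D_ne w, K.I w⟩

def CModel.toK (M : CModel) : KModel where
  W := Unit
  W_ne := ⟨()⟩
  R _ _ := True
  refl _ := trivial
  trans _ _ := trivial
  U := M.U
  D _ := M.D
  D_ne _ := M.D_ne
  D_mono _ := subset_rfl
  I _ := M.I
  hered _ _ _ _ _ h := h

lemma CModel.constDom_toK (M : CModel) : ConstDom M.toK := fun _ _ => rfl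

lemma CModel.toK_toC (M : CModel) : M.toK.toC () = M := rfl

lemma KModel.forall_le_iff_of_persistent (K : KModel) {w : K.W} {Q : K.W → Prop}
    (hQ : ∀ u, K.R w u → Q w → Q u) : (∀ u, K.R w u → Q u) ↔ Q w :=
  ⟨fun h => h w (K.refl w), fun h u hwu => hQ u hwu h⟩

section ConstDom

variable {C : Type} {ar : C → ℕ} (tf : (c : C) → (Fin (ar c) → Bool) → Bool)
  {K : KModel}

theorem kVal_persistent (hcd : ConstDom K) (φ : Formula C ar) {w v : K.W} (hwv : K.R w v) :
    ∀ {ρ : ℕ → K.U}, (∀ x, ρ x ∈ K.D w) → kVal tf K φ w ρ = true → kVal tf K φ v ρ = true := by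
  induction φ with
  | atom n p vars => exact fun hρ => K.hered hwv n p _ fun i => hρ _
  | conn c args _ =>
    intro ρ _ h
    simp only [kVal, decide_eq_true_eq] at h ⊢
    exact fun u hvu => h u (K.trans hwv hvu)
  | all x φ _ =>
    intro ρ _ h
    simp only [kVal, decide_eq_true_eq] at h ⊢
    exact fun u hvu => h u (K.trans hwv hvu)
  | ex x φ ih =>
    intro ρ hρ h
    simp only [kVal, decide_eq_true_eq] at h ⊢
    obtain ⟨a, ha, hφ⟩ := h
    exact ⟨a, hcd w v ▸ ha, ih (forall_update_mem hρ x ha) hφ⟩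

theorem kVal_eq_cVal_toC (hcd : ConstDom K) (hmono : ∀ c : C, MonoTF (tf c))
    (φ : Formula C ar) {w : K.W} :
    ∀ {ρ : ℕ → K.U}, (∀ x, ρ x ∈ K.D w) → kVal tf K φ w ρ = cVal tf (K.toC w) φ ρ := by
  induction φ with
  | atom n p vars => exact fun _ => rfl
  | conn c args ih =>
    intro ρ hρ
    have hcollapse : (∀ u, K.R w u → tf c (fun i => kVal tf K (args i) u ρ) = true) ↔
        tf c (fun i => kVal tf K (args i) w ρ) = true :=
      K.forall_le_iff_of_persistent fun u hwu => Bool.le_iff_imp.1 <| hmono c _ _ fun i =>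
        Bool.le_iff_imp.2 (kVal_persistent tf hcd (args i) hwu hρ)
    simp only [kVal, cVal, hcollapse, Bool.decide_eq_true, ih _ hρ]
  | all x φ ih =>
    intro ρ hρ
    have hcollapse : (∀ u, K.R w u → ∀ a ∈ K.D u, kVal tf K φ u (Function.update ρ x a) = true) ↔
        ∀ a ∈ K.D w, kVal tf K φ w (Function.update ρ x a) = true :=
      K.forall_le_iff_of_persistent fun u hwu h a ha =>
        have ha : a ∈ K.D w := hcd u w ▸ ha
        kVal_persistent tf hcd φ hwu (forall_update_mem hρ x ha) (h a ha)
    simp only [kVal, cVal, hcollapse, decide_eq_decide]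
    exact forall₂_congr fun a ha => by rw [ih (forall_update_mem hρ x ha)]; rfl
  | ex x φ ih =>
    intro ρ hρ
    simp only [kVal, cVal, decide_eq_decide]
    exact exists_congr fun a => and_congr_right fun ha => by
      rw [ih (forall_update_mem hρ x ha)]; rfl

end ConstDom

/-- if all connectives in `𝒞` are monotonic then
`FOCDS(𝒞) = FOCLS(𝒞)`. -/
theorem stmt_1 (C : Type) (ar : C → ℕ) (tf : (c : C) → (Fin (ar c) → Bool) → Bool)
    (hmono : ∀ c : C, MonoTF (tf c)) :
    ∀ Γ Δ : Set (Formula C ar), SeqCDValid tf Γ Δ ↔ SeqCValid tf Γ Δ := by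
  intro Γ Δ
  constructor
  · intro hCD M ρ hρ
    simpa only [kVal_eq_cVal_toC tf M.constDom_toK hmono _ (w := ()) hρ, M.toK_toC]
      using hCD M.toK M.constDom_toK () ρ hρ
  · intro hC K hcd w ρ hρ
    simpa only [kVal_eq_cVal_toC tf hcd hmono _ hρ] using hC (K.toC w) ρ hρ
end

section
/- (Propositional case.) If 𝒞 contains a non-monotonic connective, then CLS(𝒞) \ ILS(𝒞) ≠ ∅: there exists a sequent of propositional formulas over 𝒞 that is valid in all classical valuations but not valid in some propositional Kripke model. -/
open Classical


/-! Pick `a ⊑ b` with `f_c a = 1` and `f_c b = 0`, and feed `c` the atoms `p₀` (always true),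
`p₁` (always false) and `p₂` (false now, true later) so that its arguments read `a` at a world
where `p₂` is false and `b` once `p₂` has become true. Classically `p₀ ⟹ p₁, p₂, c(…)` holds,
since `p₁ = p₂ = 0` forces the arguments to be `a`. In the two-world Kripke model
`0 ⪯ 1` where `p₂` becomes true at `1`, the root refutes it: `c(…)` fails at the root because
its arguments read `b` at world `1`. -/

lemma not_monoTF_iff {n : ℕ} {f : (Fin n → Bool) → Bool} :
    ¬ MonoTF f ↔ ∃ a b : Fin n → Bool, (∀ i, a i ≤ b i) ∧ f a = true ∧ f b = false := by
  simp only [MonoTF, not_forall, not_le, Bool.lt_iff, exists_prop]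
  exact exists₂_congr fun _ _ => and_congr_right fun _ => and_comm

def gapAtom {n : ℕ} (a b : Fin n → Bool) (i : Fin n) : ℕ :=
  if a i then 0 else if b i then 2 else 1

lemma comp_gapAtom_eq_left {n : ℕ} (a b : Fin n → Bool) {v : ℕ → Bool}
    (h0 : v 0 = true) (h1 : v 1 = false) (h2 : v 2 = false) :
    v ∘ gapAtom a b = a := by
  funext i
  by_cases ha : a i <;> by_cases hb : b i <;> simp [gapAtom, ha, hb, h0, h1, h2]

lemma comp_gapAtom_eq_right {n : ℕ} {a b : Fin n → Bool} (hab : ∀ i, a i ≤ b i)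
    {v : ℕ → Bool} (h0 : v 0 = true) (h1 : v 1 = false) (h2 : v 2 = true) :
    v ∘ gapAtom a b = b := by
  funext i
  have hab := hab i
  revert hab
  by_cases ha : a i <;> by_cases hb : b i <;> simp [gapAtom, ha, hb, h0, h1, h2]

namespace PKModel

def twoWorld : PKModel where
  W := Bool
  W_ne := ⟨false⟩
  R := (· ≤ ·)
  refl := le_refl
  trans := le_trans
  I w p := decide (p = 0) || (w && decide (p = 2))
  hered {w v} hwv p := by
    revert hwv
    cases w <;> cases v <;> simp +contextual

end PKModel

lemma pkVal_conn_eq_false {C : Type} {ar : C → ℕ} {tf : (c : C) → (Fin (ar c) → Bool) → Bool}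
    {K : PKModel} {c : C} {args : Fin (ar c) → PFormula C ar} {w u : K.W} (hwu : K.R w u)
    (hu : tf c (fun i => pkVal tf K (args i) u) = false) :
    pkVal tf K (.conn c args) w = false := by
  simp only [pkVal, decide_eq_false_iff_not, not_forall]
  exact ⟨u, hwu, by simp [hu]⟩

/-- propositional case: if `𝒞` contains a non-monotonic
connective then `CLS(𝒞) \ ILS(𝒞) ≠ ∅`. -/
theorem stmt_7 (C : Type) (ar : C → ℕ) (tf : (c : C) → (Fin (ar c) → Bool) → Bool)
    (hnm : ∃ c : C, ¬ MonoTF (tf c)) :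
    ∃ Γ Δ : Set (PFormula C ar), PSeqCValid tf Γ Δ ∧ ¬ PSeqKValid tf Γ Δ := by
  obtain ⟨c, hc⟩ := hnm
  obtain ⟨a, b, hab, ha, hb⟩ := not_monoTF_iff.mp hc
  let φ : PFormula C ar := .conn c fun i => .atom (gapAtom a b i)
  refine ⟨{.atom 0}, {.atom 1, .atom 2, φ}, ?_, ?_⟩
  · rintro v ⟨hΓ, hΔ⟩
    have hφ : tf c (v ∘ gapAtom a b) = false := hΔ φ (by simp)
    rw [comp_gapAtom_eq_left a b (hΓ _ rfl) (hΔ (.atom 1) (by simp)) (hΔ (.atom 2) (by simp)),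
      ha] at hφ
    exact Bool.noConfusion hφ
  · intro hvalid
    have hφ : pkVal tf PKModel.twoWorld φ false = false :=
      pkVal_conn_eq_false (u := true) (Bool.le_true _) <| by
        change tf c (PKModel.twoWorld.I true ∘ gapAtom a b) = false
        rwa [comp_gapAtom_eq_right hab rfl rfl rfl]
    refine hvalid PKModel.twoWorld false ⟨?_, ?_⟩
    · rintro _ rfl
      rfl
    · rintro _ (rfl | rfl | rfl)
      exacts [rfl, rfl, hφ]
end

section
/- Let c ∈ 𝒞 be a non-monotonic connective with f_c(0,…,0) = f_c(1,…,1) = 1. Then there exists a propositional formula φ over 𝒞 (built only from propositional symbols and c) such that φ is valid in all classical models but not valid in some constant-domain Kripke model; in particular the sequent ⟹ φ belongs to FOCLS(𝒞) \ FOCDS(𝒞). -/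
open Classical


/-!
Non-monotonicity of `f_c` gives tuples `a ≤ b` with `f_c(a) = 1` and `f_c(b) = 0`. Feeding `c`
the formula `⊤ := c(p, …, p)` in the slots where `a` is `1`, `y` in the slots where only `b`
is `1`, and `x` elsewhere yields a binary connective `g` with `g(0,0) = g(1,1) = 1` and
`g(0,1) = 0`, while `g(1,0)` is unknown. With `r := g(p, q)`, the formula `g(q, g(g(q, r), r))`
is a classical tautology for either value of `g(1,0)`. It fails at world `0` of the two-world
chain `0 ⪯ 1` in which `p` is never true and `q` holds only at `1`: there `r` is false everywhere,
`g(g(q, r), r)` is true everywhere (if `g(q, r)` holds anywhere, then `g(1,0) = 1`, as seen at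
world `1`), and `g(0,1) = 0` refutes the formula.
-/

section FillSlots

variable {α β : Type*} {n : ℕ}

def fillSlots (a b : Fin n → Bool) (t x y : α) : Fin n → α :=
  fun i => if a i then t else if b i then y else x

theorem apply_fillSlots (f : α → β) (a b : Fin n → Bool) (t x y : α) :
    (fun i => f (fillSlots a b t x y i)) = fillSlots a b (f t) (f x) (f y) := by
  funext i
  simp only [fillSlots, apply_ite f]

theorem forall_fillSlots {P : α → Prop} (a b : Fin n → Bool) {t x y : α}
    (ht : P t) (hx : P x) (hy : P y) (i : Fin n) : P (fillSlots a b t x y i) := by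
  unfold fillSlots
  split_ifs <;> assumption

theorem fillSlots_true_false_false {a b : Fin n → Bool} (hab : ∀ i, a i ≤ b i) :
    fillSlots a b true false false = a := by
  funext i
  have := hab i
  unfold fillSlots
  revert this
  cases a i <;> cases b i <;> decide

theorem fillSlots_true_false_true {a b : Fin n → Bool} (hab : ∀ i, a i ≤ b i) :
    fillSlots a b true false true = b := by
  funext i
  have := hab i
  unfold fillSlots
  revert this
  cases a i <;> cases b i <;> decide

theorem fillSlots_true_true_true (a b : Fin n → Bool) :
    fillSlots a b true true true = fun _ => true := by
  funext i
  unfold fillSlots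
  split_ifs <;> rfl

end FillSlots

theorem exists_le_of_not_monoTF {n : ℕ} {f : (Fin n → Bool) → Bool} (hf : ¬ MonoTF f) :
    ∃ a b : Fin n → Bool, (∀ i, a i ≤ b i) ∧ f a = true ∧ f b = false := by
  simp only [MonoTF, not_forall] at hf
  obtain ⟨a, b, hab, hfab⟩ := hf
  refine ⟨a, b, hab, ?_⟩
  revert hfab
  cases f a <;> cases f b <;> decide

theorem binary_tautology {g : Bool → Bool → Bool}
    (h00 : g false false = true) (h01 : g false true = false) (h11 : g true true = true)
    (p q : Bool) : g q (g (g q (g p q)) (g p q)) = true := by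
  cases hε : g true false <;> cases p <;> cases q <;> simp [h00, h01, h11, hε]

-- Reducible, so that `simp` sees worlds and values of the model as plain `Bool`s.
abbrev chainModel : KModel where
  W := Bool
  W_ne := ⟨false⟩
  R := (· ≤ ·)
  refl := le_refl
  trans := le_trans
  U := Unit
  D := fun _ => Set.univ
  D_ne := fun _ => Set.univ_nonempty
  D_mono := fun _ => subset_rfl
  I := fun w _ p _ => w && decide (p = 1)
  hered := by
    intro w v hwv _ _ _ _ h
    revert hwv h
    cases w <;> cases v <;> simp

namespace Formula

variable {C : Type} {ar : C → ℕ}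

def prop (p : ℕ) : Formula C ar := .atom 0 p Fin.elim0

def verum (c : C) : Formula C ar := .conn c fun _ => prop 0

def slotConn (c : C) (a b : Fin (ar c) → Bool) (φ ψ : Formula C ar) : Formula C ar :=
  .conn c (fillSlots a b (verum c) φ ψ)

def witness (c : C) (a b : Fin (ar c) → Bool) : Formula C ar :=
  let g := slotConn c a b
  let r := g (prop 0) (prop 1)
  g (prop 1) (g (g (prop 1) r) r)

theorem isPropC_prop (c : C) (p : ℕ) : IsPropC c (prop p : Formula C ar) :=
  .atom p _

theorem isPropC_verum (c : C) : IsPropC c (verum c : Formula C ar) :=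
  .conn _ fun _ => isPropC_prop c 0

theorem isPropC_slotConn {c : C} (a b : Fin (ar c) → Bool) {φ ψ : Formula C ar}
    (hφ : IsPropC c φ) (hψ : IsPropC c ψ) : IsPropC c (slotConn c a b φ ψ) :=
  .conn _ (forall_fillSlots a b (isPropC_verum c) hφ hψ)

theorem isPropC_witness (c : C) (a b : Fin (ar c) → Bool) :
    IsPropC c (witness c a b : Formula C ar) := by
  have hp := isPropC_prop (ar := ar) c
  exact isPropC_slotConn a b (hp 1) <|
    isPropC_slotConn a b (isPropC_slotConn a b (hp 1) (isPropC_slotConn a b (hp 0) (hp 1)))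
      (isPropC_slotConn a b (hp 0) (hp 1))

variable (tf : (c : C) → (Fin (ar c) → Bool) → Bool) {c : C}
  (h0 : tf c (fun _ => false) = true) (h1 : tf c (fun _ => true) = true)
include h0 h1

theorem tf_const (x : Bool) : tf c (fun _ => x) = true := by
  cases x <;> assumption

theorem cVal_verum (M : CModel) (ρ : ℕ → M.U) : cVal tf M (verum c : Formula C ar) ρ = true :=
  tf_const tf h0 h1 _

theorem kVal_verum (K : KModel) (w : K.W) (ρ : ℕ → K.U) :
    kVal tf K (verum c : Formula C ar) w ρ = true :=
  decide_eq_true fun _ _ => tf_const tf h0 h1 _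

theorem cVal_slotConn (M : CModel) (ρ : ℕ → M.U) (a b : Fin (ar c) → Bool)
    (φ ψ : Formula C ar) :
    cVal tf M (slotConn c a b φ ψ) ρ
      = tf c (fillSlots a b true (cVal tf M φ ρ) (cVal tf M ψ ρ)) := by
  rw [slotConn, cVal, apply_fillSlots (cVal tf M · ρ), cVal_verum tf h0 h1]

theorem kVal_slotConn_eq_true (K : KModel) (w : K.W) (ρ : ℕ → K.U) (a b : Fin (ar c) → Bool)
    (φ ψ : Formula C ar) :
    kVal tf K (slotConn c a b φ ψ) w ρ = true ↔
      ∀ u, K.R w u →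
        tf c (fillSlots a b true (kVal tf K φ u ρ) (kVal tf K ψ u ρ)) = true := by
  rw [slotConn, kVal, decide_eq_true_iff]
  refine forall₂_congr fun u _ => ?_
  rw [apply_fillSlots (kVal tf K · u ρ), kVal_verum tf h0 h1]

theorem fmlCValid_witness {a b : Fin (ar c) → Bool}
    (h00 : tf c (fillSlots a b true false false) = true)
    (h01 : tf c (fillSlots a b true false true) = false)
    (h11 : tf c (fillSlots a b true true true) = true) :
    FmlCValid tf (witness c a b) := by
  intro M ρ _
  simp only [witness, cVal_slotConn tf h0 h1]
  exact binary_tautology (g := fun x y => tf c (fillSlots a b true x y)) h00 h01 h11 _ _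

theorem kVal_witness_chainModel {a b : Fin (ar c) → Bool}
    (h00 : tf c (fillSlots a b true false false) = true)
    (h01 : tf c (fillSlots a b true false true) = false) (ρ : ℕ → Unit) :
    kVal tf chainModel (witness c a b) false ρ = false := by
  have hp : ∀ u, kVal tf chainModel (prop 0 : Formula C ar) u ρ = false := by
    intro u; cases u <;> rfl
  have hq : ∀ u, kVal tf chainModel (prop 1 : Formula C ar) u ρ = u := by
    intro u; cases u <;> rfl
  have hval := kVal_slotConn_eq_true tf h0 h1 chainModel (a := a) (b := b)
  dsimp only [witness]
  set r : Formula C ar := slotConn c a b (prop 0) (prop 1)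
  have hr : ∀ u, kVal tf chainModel r u ρ = false := fun u =>
    Bool.eq_false_iff.2 fun h => by
      simpa [hp, hq, h01] using (hval u ρ _ _).1 h true (Bool.le_true u)
  have hs : ∀ u,
      kVal tf chainModel (slotConn c a b (slotConn c a b (prop 1) r) r) u ρ = true := by
    refine fun u => (hval u ρ _ _).2 fun v _ => ?_
    rw [hr]
    cases hx : kVal tf chainModel (slotConn c a b (prop 1) r) v ρ
    · exact h00
    · simpa [hq, hr] using (hval v ρ _ _).1 hx true (Bool.le_true v)
  exact Bool.eq_false_iff.2 fun h => by
    simpa [hq, hs, h01] using (hval false ρ _ _).1 h false le_rfl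

end Formula

section Sequents

variable {C : Type} {ar : C → ℕ} (tf : (c : C) → (Fin (ar c) → Bool) → Bool)
  (φ : Formula C ar)

theorem seqCValid_empty_singleton_iff : SeqCValid tf ∅ {φ} ↔ FmlCValid tf φ := by
  simp [SeqCValid, FmlCValid]

theorem seqCDValid_empty_singleton_iff : SeqCDValid tf ∅ {φ} ↔ FmlCDValid tf φ := by
  simp [SeqCDValid, FmlCDValid]

end Sequents

/-- if `c` is non-monotonic with `f_c(0,…,0) = f_c(1,…,1) = 1`,
then some propositional formula `φ` built only from propositional symbols and
`c` is classically valid but not CD-valid; in particular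
`⟹ φ ∈ FOCLS(𝒞) \ FOCDS(𝒞)`. -/
theorem stmt_13 (C : Type) (ar : C → ℕ) (tf : (c : C) → (Fin (ar c) → Bool) → Bool)
    (c : C) (hnm : ¬ MonoTF (tf c))
    (h0 : tf c (fun _ => false) = true) (h1 : tf c (fun _ => true) = true) :
    ∃ φ : Formula C ar, IsPropC c φ ∧
      FmlCValid tf φ ∧ ¬ FmlCDValid tf φ ∧
      SeqCValid tf (∅ : Set (Formula C ar)) {φ} ∧
      ¬ SeqCDValid tf (∅ : Set (Formula C ar)) {φ} := by
  obtain ⟨a, b, hab, ha, hb⟩ := exists_le_of_not_monoTF hnm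
  have h00 : tf c (fillSlots a b true false false) = true := by
    rwa [fillSlots_true_false_false hab]
  have h01 : tf c (fillSlots a b true false true) = false := by
    rwa [fillSlots_true_false_true hab]
  have h11 : tf c (fillSlots a b true true true) = true := by
    rwa [fillSlots_true_true_true]
  have hC : FmlCValid tf (Formula.witness c a b) := Formula.fmlCValid_witness tf h0 h1 h00 h01 h11
  have hCD : ¬ FmlCDValid tf (Formula.witness c a b) := fun h => by
    simpa [Formula.kVal_witness_chainModel tf h0 h1 h00 h01] using
      h chainModel (fun _ _ => rfl) false (fun _ => ()) (fun _ => Set.mem_univ _)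
  exact ⟨_, Formula.isPropC_witness c a b, hC, hCD, (seqCValid_empty_singleton_iff tf _).2 hC,
    mt (seqCDValid_empty_singleton_iff tf _).1 hCD⟩
end
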